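/- Let f : ℝ^d → ℝ be convex and L-smooth (differentiable with L-Lipschitz gradient, L > 0), bounded below with f* := inf f. Let w_0 ∈ ℝ^d and define gradient-descent iterates w_{τ+1} = w_τ − η ∇f(w_τ) with step size 0 < η ≤ 1/L. Let E be a positive integer and u := Σ_{τ=0}^{E−1} ∇f(w_τ). Then for every w* ∈ ℝ^d, ⟨u, w_0 − w*⟩ ≥ E·(f(w_0) − f(w*)) − 2 η² L² E³ (f(w_0) − f*). -/

import Mathlib

/-!
Each gradient is paired with `w₀ - w⋆` by splitting it as `(w₀ - w_τ) + (w_τ - w⋆)`: convexity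
bounds the second pairing below by `f w_τ - f w⋆`, and the descent lemma bounds the first below by
`f w₀ - f w_τ - (L/2) ‖w₀ - w_τ‖²`. Since `η ≤ 1/L`, gradient descent does not increase `f`, so
every gradient along the trajectory obeys `‖∇f w_s‖² ≤ 2L (f w₀ - f⋆)`; the drift after `τ` steps
is then `‖w₀ - w_τ‖² ≤ η² τ² · 2L (f w₀ - f⋆)`. Summing over `τ < E` and using `∑ τ² ≤ E³` gives
the claim.
-/

open scoped RealInnerProductSpace

section Smooth

variable {F : Type*} [NormedAddCommGroup F] [InnerProductSpace ℝ F] [CompleteSpace F]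
  {f : F → ℝ}

lemma hasDerivAt_comp_add_smul (hf : Differentiable ℝ f) (x v : F) (t : ℝ) :
    HasDerivAt (fun s : ℝ => f (x + s • v)) ⟪gradient f (x + t • v), v⟫ t := by
  have hline : HasDerivAt (fun s : ℝ => x + s • v) v t := by
    simpa using ((hasDerivAt_id t).smul_const v).const_add x
  have hval : ⟪gradient f (x + t • v), v⟫ = fderiv ℝ f (x + t • v) v :=
    InnerProductSpace.toDual_symm_apply
  rw [hval]
  exact (hf (x + t • v)).hasFDerivAt.comp_hasDerivAt t hline

lemma ConvexOn.add_inner_gradient_le (hconv : ConvexOn ℝ Set.univ f) (hf : Differentiable ℝ f)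
    (x y : F) : f x + ⟪gradient f x, y - x⟫ ≤ f y := by
  set g : ℝ → ℝ := fun s => f (x + s • (y - x))
  have hg : ConvexOn ℝ Set.univ g := by
    have hcomp : f ∘ AffineMap.lineMap x y = g := by
      funext s
      simp only [g, Function.comp_apply, AffineMap.lineMap_apply_module]
      congr 1
      module
    simpa [hcomp] using hconv.comp_affineMap (AffineMap.lineMap x y : ℝ →ᵃ[ℝ] F)
  have hg' : HasDerivAt g ⟪gradient f x, y - x⟫ 0 := by
    simpa using hasDerivAt_comp_add_smul hf x (y - x) 0
  have := hg.le_slope_of_hasDerivAt (Set.mem_univ 0) (Set.mem_univ 1) zero_lt_one hg'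
  simp only [slope_def_field, g, zero_smul, add_zero, one_smul, add_sub_cancel, sub_zero,
    div_one] at this
  linarith

lemma le_add_inner_gradient_add_sq (hf : Differentiable ℝ f) {L : ℝ}
    (hlip : ∀ x y, ‖gradient f x - gradient f y‖ ≤ L * ‖x - y‖) (x y : F) :
    f y ≤ f x + ⟪gradient f x, y - x⟫ + L / 2 * ‖y - x‖ ^ 2 := by
  set v := y - x
  set φ : ℝ → ℝ := fun t => f (x + t • v) - t * ⟪gradient f x, v⟫ - L * t ^ 2 * ‖v‖ ^ 2 / 2
  have hφ' (t : ℝ) : HasDerivAt φ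
      (⟪gradient f (x + t • v), v⟫ - ⟪gradient f x, v⟫ - L * t * ‖v‖ ^ 2) t := by
    have hquad : HasDerivAt (fun t : ℝ => L * t ^ 2 * ‖v‖ ^ 2 / 2) (L * t * ‖v‖ ^ 2) t := by
      have hsq : HasDerivAt (fun t : ℝ => t ^ 2) (2 * t) t := by
        simpa using hasDerivAt_pow 2 t
      rw [show L * t * ‖v‖ ^ 2 = L * (2 * t) * ‖v‖ ^ 2 / 2 by ring]
      exact ((hsq.const_mul L).mul_const (‖v‖ ^ 2)).div_const 2
    exact ((hasDerivAt_comp_add_smul hf x v t).sub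
      ((hasDerivAt_id t).mul_const _ |>.congr_deriv (one_mul _))).sub hquad
  have hanti : AntitoneOn φ (Set.Icc 0 1) := by
    refine antitoneOn_of_deriv_nonpos (convex_Icc 0 1)
      (fun t _ => (hφ' t).continuousAt.continuousWithinAt)
      (fun t _ => (hφ' t).differentiableAt.differentiableWithinAt) fun t ht => ?_
    rw [interior_Icc] at ht
    rw [(hφ' t).deriv, ← inner_sub_left, sub_nonpos]
    calc ⟪gradient f (x + t • v) - gradient f x, v⟫
        ≤ ‖gradient f (x + t • v) - gradient f x‖ * ‖v‖ := real_inner_le_norm _ _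
      _ ≤ L * ‖x + t • v - x‖ * ‖v‖ := by gcongr; exact hlip _ _
      _ = L * t * ‖v‖ ^ 2 := by
        rw [add_sub_cancel_left, norm_smul, Real.norm_of_nonneg ht.1.le]
        ring
  have := hanti (Set.left_mem_Icc.2 zero_le_one) (Set.right_mem_Icc.2 zero_le_one) zero_le_one
  simp only [φ, v, one_smul, zero_smul, add_zero, add_sub_cancel] at this
  linarith

lemma image_sub_smul_gradient_le (hf : Differentiable ℝ f) {L : ℝ}
    (hlip : ∀ x y, ‖gradient f x - gradient f y‖ ≤ L * ‖x - y‖) {η : ℝ} (hη0 : 0 ≤ η)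
    (hηL : η * L ≤ 2) (x : F) : f (x - η • gradient f x) ≤ f x := by
  have h := le_add_inner_gradient_add_sq hf hlip x (x - η • gradient f x)
  rw [sub_sub_cancel_left, inner_neg_right, real_inner_smul_right, real_inner_self_eq_norm_sq,
    norm_neg, norm_smul, Real.norm_of_nonneg hη0] at h
  nlinarith [mul_nonneg (mul_nonneg hη0 (sq_nonneg ‖gradient f x‖)) (sub_nonneg.2 hηL)]

/-- A gradient step of length `1/L` decreases `f` by `‖∇f x‖² / (2L)`, and cannot go below `m`. -/
lemma norm_gradient_sq_le (hf : Differentiable ℝ f) {L : ℝ} (hL : 0 < L)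
    (hlip : ∀ x y, ‖gradient f x - gradient f y‖ ≤ L * ‖x - y‖) {m : ℝ} (hm : ∀ y, m ≤ f y)
    (x : F) : ‖gradient f x‖ ^ 2 ≤ 2 * L * (f x - m) := by
  have h := le_add_inner_gradient_add_sq hf hlip x (x - L⁻¹ • gradient f x)
  rw [sub_sub_cancel_left, inner_neg_right, real_inner_smul_right, real_inner_self_eq_norm_sq,
    norm_neg, norm_smul, Real.norm_of_nonneg (inv_nonneg.2 hL.le)] at h
  have hquad : L / 2 * (L⁻¹ * ‖gradient f x‖) ^ 2 = L⁻¹ * ‖gradient f x‖ ^ 2 / 2 := by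
    field_simp
  have hdecrease : L⁻¹ * ‖gradient f x‖ ^ 2 / 2 ≤ f x - m := by
    linarith [hm (x - L⁻¹ • gradient f x)]
  calc ‖gradient f x‖ ^ 2 = 2 * L * (L⁻¹ * ‖gradient f x‖ ^ 2 / 2) := by field_simp
    _ ≤ 2 * L * (f x - m) := by gcongr

lemma sub_sub_sq_le_inner_gradient (hconv : ConvexOn ℝ Set.univ f) (hf : Differentiable ℝ f)
    {L : ℝ} (hlip : ∀ x y, ‖gradient f x - gradient f y‖ ≤ L * ‖x - y‖) (x y z : F) :
    f z - f y - L / 2 * ‖z - x‖ ^ 2 ≤ ⟪gradient f x, z - y⟫ := by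
  have hsmooth := le_add_inner_gradient_add_sq hf hlip x z
  have hconvex := hconv.add_inner_gradient_le hf x y
  have hsplit : z - y = (z - x) - (y - x) := by abel
  rw [hsplit, inner_sub_right]
  linarith

end Smooth

lemma norm_sum_sq_le_of_norm_sq_le {ι F : Type*} [SeminormedAddCommGroup F] (s : Finset ι)
    (g : ι → F) {C : ℝ} (hg : ∀ i ∈ s, ‖g i‖ ^ 2 ≤ C) :
    ‖∑ i ∈ s, g i‖ ^ 2 ≤ (s.card : ℝ) ^ 2 * C := by
  calc ‖∑ i ∈ s, g i‖ ^ 2 ≤ (∑ i ∈ s, ‖g i‖) ^ 2 := by gcongr; exact norm_sum_le _ _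
    _ ≤ s.card * ∑ i ∈ s, ‖g i‖ ^ 2 := sq_sum_le_card_mul_sum_sq
    _ ≤ s.card * (s.card * C) := by
        gcongr
        simpa using Finset.sum_le_card_nsmul s _ C hg
    _ = (s.card : ℝ) ^ 2 * C := by ring

section GradientDescent

variable {F : Type*} [NormedAddCommGroup F] [InnerProductSpace ℝ F] [CompleteSpace F]
  {f : F → ℝ} {η : ℝ} {w : ℕ → F}

lemma sub_gradientDescent_eq (hw : ∀ τ, w (τ + 1) = w τ - η • gradient f (w τ)) (τ : ℕ) :
    w 0 - w τ = η • ∑ s ∈ Finset.range τ, gradient f (w s) := by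
  induction τ with
  | zero => simp
  | succ n ih =>
    rw [hw n, Finset.sum_range_succ, smul_add, ← ih]
    abel

lemma norm_sub_gradientDescent_sq_le (hf : Differentiable ℝ f) {L : ℝ} (hL : 0 < L)
    (hlip : ∀ x y, ‖gradient f x - gradient f y‖ ≤ L * ‖x - y‖) {m : ℝ} (hm : ∀ y, m ≤ f y)
    (hη0 : 0 ≤ η) (hηL : η * L ≤ 2) (hw : ∀ τ, w (τ + 1) = w τ - η • gradient f (w τ))
    (τ : ℕ) : ‖w 0 - w τ‖ ^ 2 ≤ η ^ 2 * τ ^ 2 * (2 * L * (f (w 0) - m)) := by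
  have hmono : Antitone (f ∘ w) := antitone_nat_of_succ_le fun n => by
    simpa only [Function.comp_apply, hw n] using image_sub_smul_gradient_le hf hlip hη0 hηL (w n)
  have hgrad (s : ℕ) : ‖gradient f (w s)‖ ^ 2 ≤ 2 * L * (f (w 0) - m) :=
    calc ‖gradient f (w s)‖ ^ 2 ≤ 2 * L * (f (w s) - m) := norm_gradient_sq_le hf hL hlip hm _
      _ ≤ 2 * L * (f (w 0) - m) := by gcongr; exact hmono (Nat.zero_le s)
  have hsum := norm_sum_sq_le_of_norm_sq_le (Finset.range τ) _ fun s _ => hgrad s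
  rw [Finset.card_range] at hsum
  rw [sub_gradientDescent_eq hw, norm_smul, mul_pow, Real.norm_eq_abs, sq_abs, mul_assoc]
  gcongr

end GradientDescent

theorem stmt_9_general {d : ℕ} (f : EuclideanSpace ℝ (Fin d) → ℝ) (L : ℝ) (hL : 0 < L)
    (hconv : ConvexOn ℝ Set.univ f)
    (hdiff : Differentiable ℝ f)
    (hlip : ∀ x y, ‖gradient f x - gradient f y‖ ≤ L * ‖x - y‖)
    (fstar : ℝ) (hfstar : IsGLB (Set.range f) fstar)
    (η : ℝ) (hη0 : 0 < η) (hη : η ≤ 1 / L)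
    (w : ℕ → EuclideanSpace ℝ (Fin d))
    (hw : ∀ τ, w (τ + 1) = w τ - η • gradient f (w τ))
    (E : ℕ)
    (u : EuclideanSpace ℝ (Fin d))
    (hu : u = ∑ τ ∈ Finset.range E, gradient f (w τ))
    (wstar : EuclideanSpace ℝ (Fin d)) :
    ⟪u, w 0 - wstar⟫ ≥
      (E : ℝ) * (f (w 0) - f wstar)
        - 2 * η ^ 2 * L ^ 2 * (E : ℝ) ^ 3 * (f (w 0) - fstar) := by
  have hlow : ∀ x, fstar ≤ f x := fun x => hfstar.1 ⟨x, rfl⟩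
  have hηL : η * L ≤ 2 := by rw [le_div_iff₀ hL] at hη; linarith
  set G := f (w 0) - fstar
  have hG : 0 ≤ G := sub_nonneg.2 (hlow _)
  have hterm (τ : ℕ) (hτ : τ ∈ Finset.range E) :
      f (w 0) - f wstar - η ^ 2 * L ^ 2 * E ^ 2 * G ≤ ⟪gradient f (w τ), w 0 - wstar⟫ := by
    have hdrift := norm_sub_gradientDescent_sq_le hdiff hL hlip hlow hη0.le hηL hw τ
    have hτE : (τ : ℝ) ≤ E := by exact_mod_cast (Finset.mem_range.1 hτ).le
    have hτE_sq : η ^ 2 * L ^ 2 * τ ^ 2 * G ≤ η ^ 2 * L ^ 2 * E ^ 2 * G := by gcongr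
    have hdrift_cost := mul_le_mul_of_nonneg_left hdrift (half_pos hL).le
    linarith [sub_sub_sq_le_inner_gradient hconv hdiff hlip (w τ) wstar (w 0)]
  have hsum := Finset.sum_le_sum hterm
  rw [hu, sum_inner]
  simp only [Finset.sum_const, Finset.card_range, nsmul_eq_mul] at hsum
  have : 0 ≤ η ^ 2 * L ^ 2 * E ^ 3 * G := by positivity
  linarith

/-- Equation (pf-july15-13): lower bound on the inner product of the update with
the direction towards any comparison point. -/
theorem stmt_9 {d : ℕ} (f : EuclideanSpace ℝ (Fin d) → ℝ) (L : ℝ) (hL : 0 < L)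
    (hconv : ConvexOn ℝ Set.univ f)
    (hdiff : Differentiable ℝ f)
    (hlip : ∀ x y, ‖gradient f x - gradient f y‖ ≤ L * ‖x - y‖)
    (fstar : ℝ) (hfstar : IsGLB (Set.range f) fstar)
    (η : ℝ) (hη0 : 0 < η) (hη : η ≤ 1 / L)
    (w : ℕ → EuclideanSpace ℝ (Fin d))
    (hw : ∀ τ, w (τ + 1) = w τ - η • gradient f (w τ))
    (E : ℕ) (hE : 0 < E)
    (u : EuclideanSpace ℝ (Fin d))
    (hu : u = ∑ τ ∈ Finset.range E, gradient f (w τ))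
    (wstar : EuclideanSpace ℝ (Fin d)) :
    ⟪u, w 0 - wstar⟫ ≥
      (E : ℝ) * (f (w 0) - f wstar)
        - 2 * η ^ 2 * L ^ 2 * (E : ℝ) ^ 3 * (f (w 0) - fstar) :=
  stmt_9_general f L hL hconv hdiff hlip fstar hfstar η hη0 hη w hw E u hu wstar
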